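/- arXiv:2305.13619 — 8 statements merged into one kernel-verified Lean document; each statement's English description precedes it below -/
import Mathlib

section
/- For every x = (x1,x2,x3,x4) ∈ (0,1)^4 and y ∈ (0,1), the vector p^st(x,y) := (x^st·y, x^st·(1−y), (1−x^st)·y, (1−x^st)·(1−y)), where x^st = x^st(x,y) is the marginalized strategy, is a probability vector (all entries positive, summing to 1) and is stationary for the Markov transition matrix M(x,y), i.e. M(x,y) · p^st(x,y) = p^st(x,y). -/
/-- Δ(x,y) := x̃1·y + x̃2·ỹ + x3·y + x4·ỹ -/
noncomputable def Del (x1 x2 x3 x4 y : ℝ) : ℝ :=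
  (1 - x1) * y + (1 - x2) * (1 - y) + x3 * y + x4 * (1 - y)

/-- Marginalized strategy x^st(x,y) := (x3·y + x4·ỹ)/Δ(x,y). -/
noncomputable def xst (x1 x2 x3 x4 y : ℝ) : ℝ :=
  (x3 * y + x4 * (1 - y)) / Del x1 x2 x3 x4 y

/-- The Markov transition matrix M(x,y), rows/columns indexed by the four states. -/
noncomputable def Mmat (x1 x2 x3 x4 y : ℝ) : Matrix (Fin 4) (Fin 4) ℝ :=
  !![x1 * y,             x2 * y,             x3 * y,             x4 * y;
     x1 * (1 - y),       x2 * (1 - y),       x3 * (1 - y),       x4 * (1 - y);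
     (1 - x1) * y,       (1 - x2) * y,       (1 - x3) * y,       (1 - x4) * y;
     (1 - x1) * (1 - y), (1 - x2) * (1 - y), (1 - x3) * (1 - y), (1 - x4) * (1 - y)]

/-- The product-form stationary vector p^st(x,y). -/
noncomputable def pst (x1 x2 x3 x4 y : ℝ) : Fin 4 → ℝ :=
  ![xst x1 x2 x3 x4 y * y, xst x1 x2 x3 x4 y * (1 - y),
    (1 - xst x1 x2 x3 x4 y) * y, (1 - xst x1 x2 x3 x4 y) * (1 - y)]

/-- p^st(x,y) is a probability vector and is stationary for M(x,y). -/
theorem stmt0 (x1 x2 x3 x4 y : ℝ)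
    (h1 : x1 ∈ Set.Ioo (0 : ℝ) 1) (h2 : x2 ∈ Set.Ioo (0 : ℝ) 1)
    (h3 : x3 ∈ Set.Ioo (0 : ℝ) 1) (h4 : x4 ∈ Set.Ioo (0 : ℝ) 1)
    (hy : y ∈ Set.Ioo (0 : ℝ) 1) :
    (∀ i, 0 < pst x1 x2 x3 x4 y i) ∧
    (∑ i, pst x1 x2 x3 x4 y i = 1) ∧
    (Mmat x1 x2 x3 x4 y).mulVec (pst x1 x2 x3 x4 y) = pst x1 x2 x3 x4 y := by
  obtain ⟨h10, h11⟩ := h1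
  obtain ⟨h20, h21⟩ := h2
  obtain ⟨h30, h31⟩ := h3
  obtain ⟨h40, h41⟩ := h4
  obtain ⟨hy0, hy1⟩ := hy
  have hy1' : 0 < 1 - y := by linarith
  have hN : 0 < x3 * y + x4 * (1 - y) := by positivity
  have hD : 0 < Del x1 x2 x3 x4 y := by
    unfold Del; nlinarith
  have hD' : Del x1 x2 x3 x4 y ≠ 0 := ne_of_gt hD
  have hx0 : 0 < xst x1 x2 x3 x4 y := div_pos hN hD
  have hx1 : xst x1 x2 x3 x4 y < 1 := by
    rw [xst, div_lt_one hD]; unfold Del; nlinarith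
  have hx1' : 0 < 1 - xst x1 x2 x3 x4 y := by linarith
  refine ⟨?_, ?_, ?_⟩
  · intro i
    fin_cases i <;> simp [pst] <;> positivity
  · simp [pst, Fin.sum_univ_four]; ring
  · funext i
    fin_cases i <;>
      · simp [Mmat, pst, Matrix.mulVec, dotProduct, Fin.sum_univ_four, xst]
        field_simp
        unfold Del
        ring
end

section
/- For every x = (x1,x2,x3,x4) ∈ (0,1)^4 and y ∈ (0,1), if p = (p1,p2,p3,p4) is any vector with nonnegative entries summing to 1 satisfying M(x,y) · p = p, then p equals the product-form vector (x^st·y, x^st·(1−y), (1−x^st)·y, (1−x^st)·(1−y)) with x^st = x^st(x,y); i.e. the stationary distribution of M(x,y) is unique. -/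
/-- the stationary distribution of M(x,y) is unique, and equals the
product-form vector p^st(x,y). -/
theorem stmt1 (x1 x2 x3 x4 y : ℝ)
    (h1 : x1 ∈ Set.Ioo (0 : ℝ) 1) (h2 : x2 ∈ Set.Ioo (0 : ℝ) 1)
    (h3 : x3 ∈ Set.Ioo (0 : ℝ) 1) (h4 : x4 ∈ Set.Ioo (0 : ℝ) 1)
    (hy : y ∈ Set.Ioo (0 : ℝ) 1)
    (p : Fin 4 → ℝ) (hnonneg : ∀ i, 0 ≤ p i) (hsum : ∑ i, p i = 1)
    (hstat : (Mmat x1 x2 x3 x4 y).mulVec p = p) :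
    p = pst x1 x2 x3 x4 y := by
  obtain ⟨h1a, h1b⟩ := h1
  obtain ⟨h2a, h2b⟩ := h2
  obtain ⟨h3a, h3b⟩ := h3
  obtain ⟨h4a, h4b⟩ := h4
  obtain ⟨hya, hyb⟩ := hy
  have hDel : Del x1 x2 x3 x4 y > 0 := by
    unfold Del; nlinarith
  have e0 := congrFun hstat 0
  have e1 := congrFun hstat 1
  have e2 := congrFun hstat 2
  have e3 := congrFun hstat 3
  simp [Mmat, Matrix.mulVec, dotProduct, Fin.sum_univ_four] at e0 e1 e2 e3
  simp [Fin.sum_univ_four] at hsum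
  set S := x1 * p 0 + x2 * p 1 + x3 * p 2 + x4 * p 3 with hS
  have hp0 : p 0 = y * S := by rw [hS]; linear_combination -e0
  have hp1 : p 1 = (1 - y) * S := by rw [hS]; linear_combination -e1
  have hp2 : p 2 = y * (1 - S) := by rw [hS]; linear_combination -e2 + y * hsum
  have hp3 : p 3 = (1 - y) * (1 - S) := by
    rw [hS]; linear_combination -e3 + (1 - y) * hsum
  have hSeq : S * Del x1 x2 x3 x4 y = x3 * y + x4 * (1 - y) := by
    unfold Del
    nlinarith [hp0, hp1, hp2, hp3, hS]
  have hxst : xst x1 x2 x3 x4 y = S := by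
    rw [xst, div_eq_iff hDel.ne', ← hSeq]; try ring
  funext i
  fin_cases i <;> simp [pst, hxst] <;> try linarith [hp0, hp1, hp2, hp3]
end

section
/- If y equals the original equilibrium strategy y^o = (u4−u2)/(u1−u2−u3+u4), then the stationary payoff is constant in x: for every x ∈ (0,1)^4, u^st(x, y^o) = u^o = (u1·u4 − u2·u3)/(u1−u2−u3+u4). -/
/-- Stationary payoff u^st(x,y). -/
noncomputable def ust (u1 u2 u3 u4 x1 x2 x3 x4 y : ℝ) : ℝ :=
  xst x1 x2 x3 x4 y * y * u1 + xst x1 x2 x3 x4 y * (1 - y) * u2 +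
  (1 - xst x1 x2 x3 x4 y) * y * u3 + (1 - xst x1 x2 x3 x4 y) * (1 - y) * u4

/-- at y = y^o the stationary payoff is constant in x, equal to u^o. -/
theorem stmt4 (u1 u2 u3 u4 : ℝ)
    (h12 : u1 > u2) (h13 : u1 > u3) (h42 : u4 > u2) (h43 : u4 > u3)
    (x1 x2 x3 x4 : ℝ)
    (h1 : x1 ∈ Set.Ioo (0 : ℝ) 1) (h2 : x2 ∈ Set.Ioo (0 : ℝ) 1)
    (h3 : x3 ∈ Set.Ioo (0 : ℝ) 1) (h4 : x4 ∈ Set.Ioo (0 : ℝ) 1) :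
    ust u1 u2 u3 u4 x1 x2 x3 x4 ((u4 - u2) / (u1 - u2 - u3 + u4)) =
      (u1 * u4 - u2 * u3) / (u1 - u2 - u3 + u4) := by
  have hD : u1 - u2 - u3 + u4 ≠ 0 := by nlinarith
  unfold ust
  set a := xst x1 x2 x3 x4 ((u4 - u2) / (u1 - u2 - u3 + u4)) with ha
  field_simp
  ring
end

section
/- For every x ∈ (0,1)^4, y ∈ (0,1), and each index i ∈ {1,2,3,4}, the partial derivative of the marginalized strategy with respect to the strategy component x_i is strictly positive: ∂x^st(x,y)/∂x_i > 0. -/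
/-- ∂x^st(x,y)/∂x_i > 0 for each of the four strategy components. -/
theorem stmt7 (x1 x2 x3 x4 y : ℝ)
    (h1 : x1 ∈ Set.Ioo (0 : ℝ) 1) (h2 : x2 ∈ Set.Ioo (0 : ℝ) 1)
    (h3 : x3 ∈ Set.Ioo (0 : ℝ) 1) (h4 : x4 ∈ Set.Ioo (0 : ℝ) 1)
    (hy : y ∈ Set.Ioo (0 : ℝ) 1) :
    0 < deriv (fun t => xst t x2 x3 x4 y) x1 ∧
    0 < deriv (fun t => xst x1 t x3 x4 y) x2 ∧
    0 < deriv (fun t => xst x1 x2 t x4 y) x3 ∧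
    0 < deriv (fun t => xst x1 x2 x3 t y) x4 := by
  obtain ⟨h10, h11⟩ := h1
  obtain ⟨h20, h21⟩ := h2
  obtain ⟨h30, h31⟩ := h3
  obtain ⟨h40, h41⟩ := h4
  obtain ⟨hy0, hy1⟩ := hy
  have hy1' : 0 < 1 - y := by linarith
  have hDel : 0 < Del x1 x2 x3 x4 y := by
    unfold Del; nlinarith
  have hDelne : Del x1 x2 x3 x4 y ≠ 0 := ne_of_gt hDel
  have hN : 0 < x3 * y + x4 * (1 - y) := by nlinarith
  refine ⟨?_, ?_, ?_, ?_⟩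
  · have hd : HasDerivAt (fun t => Del t x2 x3 x4 y) (-y) x1 := by
      unfold Del
      have := ((hasDerivAt_id x1).const_sub 1).mul_const y
      have h2 := (this.add_const ((1 - x2) * (1 - y))).add_const (x3 * y)
      simpa [mul_comm, add_assoc] using h2.add_const (x4 * (1 - y))
    have hf : HasDerivAt (fun t => xst t x2 x3 x4 y)
        ((0 * Del x1 x2 x3 x4 y - (x3 * y + x4 * (1 - y)) * (-y)) /
          (Del x1 x2 x3 x4 y)^2) x1 :=
      (hasDerivAt_const x1 (x3 * y + x4 * (1 - y))).div hd hDelne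
    rw [hf.deriv]
    have : (0 * Del x1 x2 x3 x4 y - (x3 * y + x4 * (1 - y)) * (-y)) =
        (x3 * y + x4 * (1 - y)) * y := by ring
    rw [this]
    positivity
  · have hd : HasDerivAt (fun t => Del x1 t x3 x4 y) (-(1 - y)) x2 := by
      unfold Del
      have := ((hasDerivAt_id x2).const_sub 1).mul_const (1 - y)
      have h2 := ((this.const_add ((1 - x1) * y)).add_const (x3 * y)).add_const (x4 * (1 - y))
      simpa using h2
    have hf : HasDerivAt (fun t => xst x1 t x3 x4 y)
        ((0 * Del x1 x2 x3 x4 y - (x3 * y + x4 * (1 - y)) * (-(1 - y))) /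
          (Del x1 x2 x3 x4 y)^2) x2 :=
      (hasDerivAt_const x2 (x3 * y + x4 * (1 - y))).div hd hDelne
    rw [hf.deriv]
    have : (0 * Del x1 x2 x3 x4 y - (x3 * y + x4 * (1 - y)) * (-(1 - y))) =
        (x3 * y + x4 * (1 - y)) * (1 - y) := by ring
    rw [this]
    positivity
  · have hn : HasDerivAt (fun t : ℝ => t * y + x4 * (1 - y)) y x3 := by
      simpa using ((hasDerivAt_id x3).mul_const y).add_const (x4 * (1 - y))
    have hd : HasDerivAt (fun t => Del x1 x2 t x4 y) y x3 := by
      unfold Del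
      have := ((hasDerivAt_id x3).mul_const y).const_add ((1 - x1) * y + (1 - x2) * (1 - y))
      simpa [add_assoc] using this.add_const (x4 * (1 - y))
    have hf : HasDerivAt (fun t => xst x1 x2 t x4 y)
        ((y * Del x1 x2 x3 x4 y - (x3 * y + x4 * (1 - y)) * y) /
          (Del x1 x2 x3 x4 y)^2) x3 := hn.div hd hDelne
    rw [hf.deriv]
    apply div_pos
    · unfold Del
      nlinarith [mul_pos (mul_pos hy0 (sub_pos.2 h11)) hy0,
        mul_pos (mul_pos hy0 (sub_pos.2 h21)) hy1']
    · positivity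
  · have hn : HasDerivAt (fun t : ℝ => x3 * y + t * (1 - y)) (1 - y) x4 := by
      simpa using ((hasDerivAt_id x4).mul_const (1 - y)).const_add (x3 * y)
    have hd : HasDerivAt (fun t => Del x1 x2 x3 t y) (1 - y) x4 := by
      unfold Del
      simpa using ((hasDerivAt_id x4).mul_const (1 - y)).const_add
        ((1 - x1) * y + (1 - x2) * (1 - y) + x3 * y)
    have hf : HasDerivAt (fun t => xst x1 x2 x3 t y)
        (((1 - y) * Del x1 x2 x3 x4 y - (x3 * y + x4 * (1 - y)) * (1 - y)) /
          (Del x1 x2 x3 x4 y)^2) x4 := hn.div hd hDelne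
    rw [hf.deriv]
    apply div_pos
    · unfold Del
      nlinarith [mul_pos (mul_pos hy1' (sub_pos.2 h11)) hy0,
        mul_pos (mul_pos hy1' (sub_pos.2 h21)) hy1']
    · positivity
end

section
/- A pair (x*, y*) ∈ (0,1)^4 × (0,1) is a with-memory Nash equilibrium — i.e. u^st(x, y*) ≤ u^st(x*, y*) for all x ∈ (0,1)^4 and u^st(x*, y) ≥ u^st(x*, y*) for all y ∈ (0,1) — if and only if x^st(x*, y*) = x^o, y* = y^o, and −(1−x1*)·x4* + (1−x2*)·x3* ≥ 0. -/
lemma del_pos {x1 x2 x3 x4 y : ℝ} (h1 : x1 ∈ Set.Ioo (0:ℝ) 1) (h2 : x2 ∈ Set.Ioo (0:ℝ) 1)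
    (h3 : x3 ∈ Set.Ioo (0:ℝ) 1) (h4 : x4 ∈ Set.Ioo (0:ℝ) 1) (hy : y ∈ Set.Ioo (0:ℝ) 1) :
    0 < Del x1 x2 x3 x4 y := by
  obtain ⟨a1, b1⟩ := h1; obtain ⟨a2, b2⟩ := h2; obtain ⟨a3, b3⟩ := h3
  obtain ⟨a4, b4⟩ := h4; obtain ⟨ay, by'⟩ := hy
  unfold Del; nlinarith

lemma ust_eq (u1 u2 u3 u4 x1 x2 x3 x4 y : ℝ) :
    ust u1 u2 u3 u4 x1 x2 x3 x4 y =
      xst x1 x2 x3 x4 y * (y * (u1 - u2 - u3 + u4) - (u4 - u2)) + (y * u3 + (1 - y) * u4) := by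
  unfold ust; ring

lemma xst_diag (t y : ℝ) : xst t t t t y = t := by
  unfold xst Del
  rw [show (1 - t) * y + (1 - t) * (1 - y) + t * y + t * (1 - y) = 1 by ring]
  rw [div_one]; ring

set_option maxHeartbeats 2000000 in
/-- (x*,y*) is a with-memory Nash equilibrium iff
x^st(x*,y*) = x^o, y* = y^o, and −x̃1*·x4* + x̃2*·x3* ≥ 0. -/
theorem stmt11 (u1 u2 u3 u4 : ℝ)
    (h12 : u1 > u2) (h13 : u1 > u3) (h42 : u4 > u2) (h43 : u4 > u3)
    (x1 x2 x3 x4 y : ℝ)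
    (h1 : x1 ∈ Set.Ioo (0 : ℝ) 1) (h2 : x2 ∈ Set.Ioo (0 : ℝ) 1)
    (h3 : x3 ∈ Set.Ioo (0 : ℝ) 1) (h4 : x4 ∈ Set.Ioo (0 : ℝ) 1)
    (hy : y ∈ Set.Ioo (0 : ℝ) 1) :
    ((∀ x1' ∈ Set.Ioo (0 : ℝ) 1, ∀ x2' ∈ Set.Ioo (0 : ℝ) 1,
        ∀ x3' ∈ Set.Ioo (0 : ℝ) 1, ∀ x4' ∈ Set.Ioo (0 : ℝ) 1,
        ust u1 u2 u3 u4 x1' x2' x3' x4' y ≤ ust u1 u2 u3 u4 x1 x2 x3 x4 y) ∧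
      (∀ y' ∈ Set.Ioo (0 : ℝ) 1,
        ust u1 u2 u3 u4 x1 x2 x3 x4 y' ≥ ust u1 u2 u3 u4 x1 x2 x3 x4 y)) ↔
    (xst x1 x2 x3 x4 y = (u4 - u3) / (u1 - u2 - u3 + u4) ∧
      y = (u4 - u2) / (u1 - u2 - u3 + u4) ∧
      0 ≤ -((1 - x1) * x4) + (1 - x2) * x3) := by
  have hD : (0:ℝ) < u1 - u2 - u3 + u4 := by linarith
  have hDel : 0 < Del x1 x2 x3 x4 y := del_pos h1 h2 h3 h4 hy
  obtain ⟨a1, b1⟩ := h1; obtain ⟨a2, b2⟩ := h2; obtain ⟨a3, b3⟩ := h3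
  obtain ⟨a4, b4⟩ := h4; obtain ⟨ay, by'⟩ := hy
  have hA : 0 < x3 * y + x4 * (1 - y) := by nlinarith
  have hADel : x3 * y + x4 * (1 - y) < Del x1 x2 x3 x4 y := by unfold Del; nlinarith
  obtain ⟨m, hmdef⟩ : ∃ t : ℝ,
      t = (u1 - u2 - u3 + u4) * (x3 - x4) - (u4 - u3) * ((x2 - x1) + (x3 - x4)) := ⟨_, rfl⟩
  obtain ⟨b, hbdef⟩ : ∃ t : ℝ,
      t = (u1 - u2 - u3 + u4) * (x3 * y + x4 * (1 - y)) - (u4 - u3) * Del x1 x2 x3 x4 y := ⟨_, rfl⟩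
  have key : y * (u1 - u2 - u3 + u4) = u4 - u2 →
      ∀ y' : ℝ, Del x1 x2 x3 x4 y' ≠ 0 →
      (ust u1 u2 u3 u4 x1 x2 x3 x4 y' - ust u1 u2 u3 u4 x1 x2 x3 x4 y) *
        Del x1 x2 x3 x4 y' = (y' - y) * (b + m * (y' - y)) := by
    intro hK y' hd'
    have hxst : xst x1 x2 x3 x4 y * Del x1 x2 x3 x4 y = x3 * y + x4 * (1 - y) :=
      div_mul_cancel₀ _ hDel.ne'
    have hxst' : xst x1 x2 x3 x4 y' * Del x1 x2 x3 x4 y' = x3 * y' + x4 * (1 - y') :=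
      div_mul_cancel₀ _ hd'
    rw [ust_eq, ust_eq]
    rw [show y * (u1 - u2 - u3 + u4) - (u4 - u2) = 0 by linarith]
    rw [hbdef, hmdef]
    unfold Del at hxst' ⊢
    linear_combination (y' * (u1 - u2 - u3 + u4) - (u4 - u2)) * hxst' +
      (x3 * y' + x4 * (1 - y')) * hK
  -- identity relating m, S and b
  have hid : m * Del x1 x2 x3 x4 y = (u1 - u2 - u3 + u4) * (-((1 - x1) * x4) + (1 - x2) * x3)
      + ((x2 - x1) + (x3 - x4)) * b := by
    rw [hmdef, hbdef]; unfold Del; ring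
  constructor
  · rintro ⟨H1, H2⟩
    obtain ⟨p, hpdef⟩ : ∃ t : ℝ, t = xst x1 x2 x3 x4 y := ⟨_, rfl⟩
    have hp0 : 0 < p := by rw [hpdef, xst]; exact div_pos hA hDel
    have hp1 : p < 1 := by rw [hpdef, xst]; exact (div_lt_one hDel).mpr hADel
    have H1' : ∀ t ∈ Set.Ioo (0:ℝ) 1,
        t * (y * (u1 - u2 - u3 + u4) - (u4 - u2)) ≤ p * (y * (u1 - u2 - u3 + u4) - (u4 - u2)) := by
      intro t ht
      have h := H1 t ht t ht t ht t ht
      rw [ust_eq, ust_eq, xst_diag, ← hpdef] at h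
      linarith
    have hK : y * (u1 - u2 - u3 + u4) = u4 - u2 := by
      by_contra hne
      rcases lt_or_gt_of_ne hne with hlt | hgt
      · have h := H1' (p / 2) ⟨by linarith, by linarith⟩
        nlinarith
      · have h := H1' ((1 + p) / 2) ⟨by linarith, by linarith⟩
        nlinarith
    have hyo : y = (u4 - u2) / (u1 - u2 - u3 + u4) := by
      rw [eq_div_iff hD.ne']; exact hK
    have H2' : ∀ y' ∈ Set.Ioo (0:ℝ) 1, 0 ≤ (y' - y) * (b + m * (y' - y)) := by
      intro y' hy'
      have hd' : 0 < Del x1 x2 x3 x4 y' := del_pos ⟨a1, b1⟩ ⟨a2, b2⟩ ⟨a3, b3⟩ ⟨a4, b4⟩ hy'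
      have hge := H2 y' hy'
      have hk := key hK y' hd'.ne'
      have h0 : 0 ≤ (ust u1 u2 u3 u4 x1 x2 x3 x4 y' - ust u1 u2 u3 u4 x1 x2 x3 x4 y) *
          Del x1 x2 x3 x4 y' := mul_nonneg (by linarith) hd'.le
      rw [hk] at h0
      exact h0
    have hb0 : b = 0 := by
      by_contra hb
      rcases lt_or_gt_of_ne hb with hbneg | hbpos
      · obtain ⟨ε, hεdef⟩ : ∃ t : ℝ, t = min ((1 - y) / 2) (-b / (2 * (|m| + 1))) := ⟨_, rfl⟩
        have hε : 0 < ε := by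
          rw [hεdef]; exact lt_min (by linarith) (div_pos (by linarith) (by positivity))
        have hε1 : ε ≤ (1 - y) / 2 := hεdef ▸ min_le_left _ _
        have hε2 : ε ≤ -b / (2 * (|m| + 1)) := hεdef ▸ min_le_right _ _
        have habs : m ≤ |m| := le_abs_self m
        have habs0 : (0:ℝ) ≤ |m| := abs_nonneg m
        have h2ε : (|m| + 1) * ε ≤ -b / 2 := by
          rw [le_div_iff₀ (by positivity)] at hε2; nlinarith
        have h5 : b + m * ε ≤ b / 2 := by
          nlinarith [mul_le_mul_of_nonneg_right habs hε.le]
        have h6 : ε * (b + m * ε) < 0 := mul_neg_of_pos_of_neg hε (by linarith)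
        have h := H2' (y + ε) ⟨by linarith, by linarith⟩
        nlinarith [h6]
      · obtain ⟨ε, hεdef⟩ : ∃ t : ℝ, t = min (y / 2) (b / (2 * (|m| + 1))) := ⟨_, rfl⟩
        have hε : 0 < ε := by
          rw [hεdef]; exact lt_min (by linarith) (div_pos (by linarith) (by positivity))
        have hε1 : ε ≤ y / 2 := hεdef ▸ min_le_left _ _
        have hε2 : ε ≤ b / (2 * (|m| + 1)) := hεdef ▸ min_le_right _ _
        have habs : m ≤ |m| := le_abs_self m
        have habs0 : (0:ℝ) ≤ |m| := abs_nonneg m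
        have h2ε : (|m| + 1) * ε ≤ b / 2 := by
          rw [le_div_iff₀ (by positivity)] at hε2; nlinarith
        have h5 : b / 2 ≤ b - m * ε := by
          nlinarith [mul_le_mul_of_nonneg_right habs hε.le]
        have h6 : 0 < ε * (b - m * ε) := mul_pos hε (by linarith)
        have h := H2' (y - ε) ⟨by linarith, by linarith⟩
        nlinarith [h6]
    have hm : 0 ≤ m := by
      have h := H2' ((1 + y) / 2) ⟨by linarith, by linarith⟩
      rw [hb0] at h
      by_contra hneg
      push_neg at hneg
      have hq : (0:ℝ) < (1 + y) / 2 - y := by linarith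
      nlinarith [mul_pos hq hq]
    refine ⟨?_, hyo, ?_⟩
    · rw [xst, div_eq_div_iff hDel.ne' hD.ne']
      rw [hbdef] at hb0; linarith
    · rw [hb0] at hid
      nlinarith
  · rintro ⟨hx, hyo, hS⟩
    have hK : y * (u1 - u2 - u3 + u4) = u4 - u2 := by
      rw [hyo]; field_simp
    have hb0 : b = 0 := by
      rw [xst, div_eq_div_iff hDel.ne' hD.ne'] at hx
      rw [hbdef]; linarith
    rw [hb0] at hid
    have hm : 0 ≤ m := by nlinarith
    constructor
    · intro x1' h1' x2' h2' x3' h3' x4' h4'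
      rw [ust_eq, ust_eq, show y * (u1 - u2 - u3 + u4) - (u4 - u2) = 0 by linarith]
      simp
    · intro y' hy'
      have hd' : 0 < Del x1 x2 x3 x4 y' := del_pos ⟨a1, b1⟩ ⟨a2, b2⟩ ⟨a3, b3⟩ ⟨a4, b4⟩ hy'
      have hk := key hK y' hd'.ne'
      rw [hb0] at hk
      have hnn : 0 ≤ (ust u1 u2 u3 u4 x1 x2 x3 x4 y' - ust u1 u2 u3 u4 x1 x2 x3 x4 y) *
          Del x1 x2 x3 x4 y' := by
        rw [hk]; nlinarith [sq_nonneg (y' - y)]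
      nlinarith
end

section
/- If (x*, y*) ∈ (0,1)^4 × (0,1) is a with-memory Nash equilibrium (u^st(x, y*) ≤ u^st(x*, y*) for all x ∈ (0,1)^4 and u^st(x*, y) ≥ u^st(x*, y*) for all y ∈ (0,1)), then the equilibrium payoff equals the original game value: u^st(x*, y*) = u^o = (u1·u4 − u2·u3)/(u1−u2−u3+u4). -/
/-- at any with-memory Nash equilibrium, the payoff equals the
original game value u^o. -/
theorem stmt12 (u1 u2 u3 u4 : ℝ)
    (h12 : u1 > u2) (h13 : u1 > u3) (h42 : u4 > u2) (h43 : u4 > u3)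
    (x1 x2 x3 x4 y : ℝ)
    (h1 : x1 ∈ Set.Ioo (0 : ℝ) 1) (h2 : x2 ∈ Set.Ioo (0 : ℝ) 1)
    (h3 : x3 ∈ Set.Ioo (0 : ℝ) 1) (h4 : x4 ∈ Set.Ioo (0 : ℝ) 1)
    (hy : y ∈ Set.Ioo (0 : ℝ) 1)
    (hX : ∀ x1' ∈ Set.Ioo (0 : ℝ) 1, ∀ x2' ∈ Set.Ioo (0 : ℝ) 1,
        ∀ x3' ∈ Set.Ioo (0 : ℝ) 1, ∀ x4' ∈ Set.Ioo (0 : ℝ) 1,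
        ust u1 u2 u3 u4 x1' x2' x3' x4' y ≤ ust u1 u2 u3 u4 x1 x2 x3 x4 y)
    (hY : ∀ y' ∈ Set.Ioo (0 : ℝ) 1,
        ust u1 u2 u3 u4 x1 x2 x3 x4 y' ≥ ust u1 u2 u3 u4 x1 x2 x3 x4 y) :
    ust u1 u2 u3 u4 x1 x2 x3 x4 y = (u1 * u4 - u2 * u3) / (u1 - u2 - u3 + u4) := by
  obtain ⟨h10, h11⟩ := h1
  obtain ⟨h20, h21⟩ := h2
  obtain ⟨h30, h31⟩ := h3
  obtain ⟨h40, h41⟩ := h4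
  obtain ⟨hy0, hy1⟩ := hy
  have hy1' : (0:ℝ) < 1 - y := by linarith
  have hD : (0:ℝ) < u1 - u2 - u3 + u4 := by linarith
  have hDel : 0 < Del x1 x2 x3 x4 y := by
    unfold Del
    nlinarith [mul_pos (by linarith : (0:ℝ) < 1 - x1) hy0,
      mul_pos (by linarith : (0:ℝ) < 1 - x2) hy1',
      mul_pos h30 hy0, mul_pos h40 hy1']
  set p := xst x1 x2 x3 x4 y with hp_def
  have hp0 : 0 < p := by
    rw [hp_def, xst]
    exact div_pos (by nlinarith [mul_pos h30 hy0, mul_pos h40 hy1']) hDel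
  have hp1 : p < 1 := by
    rw [hp_def, xst, div_lt_one hDel]
    unfold Del
    nlinarith [mul_pos (by linarith : (0:ℝ) < 1 - x1) hy0,
      mul_pos (by linarith : (0:ℝ) < 1 - x2) hy1']
  -- any q ∈ (0,1) is an achievable marginalized strategy, hence suboptimal
  have key : ∀ q : ℝ, 0 < q → q < 1 →
      q * (y * u1 + (1 - y) * u2) + (1 - q) * (y * u3 + (1 - y) * u4)
        ≤ ust u1 u2 u3 u4 x1 x2 x3 x4 y := by
    intro q hq0 hq1
    have hden : Del ((1 + q) / 2) ((1 + q) / 2) (q / 2) (q / 2) y = 1 / 2 := by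
      unfold Del; ring
    have hx' : xst ((1 + q) / 2) ((1 + q) / 2) (q / 2) (q / 2) y = q := by
      unfold xst
      rw [hden]
      field_simp
      ring
    have h := hX ((1 + q) / 2) ⟨by linarith, by linarith⟩
      ((1 + q) / 2) ⟨by linarith, by linarith⟩
      (q / 2) ⟨by linarith, by linarith⟩
      (q / 2) ⟨by linarith, by linarith⟩
    calc q * (y * u1 + (1 - y) * u2) + (1 - q) * (y * u3 + (1 - y) * u4)
        = ust u1 u2 u3 u4 ((1 + q) / 2) ((1 + q) / 2) (q / 2) (q / 2) y := by
          unfold ust; rw [hx']; ring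
      _ ≤ _ := h
  have hV : ust u1 u2 u3 u4 x1 x2 x3 x4 y
      = p * (y * u1 + (1 - y) * u2) + (1 - p) * (y * u3 + (1 - y) * u4) := by
    unfold ust
    rw [← hp_def]
    ring
  have k1 := key ((p + 1) / 2) (by linarith) (by linarith)
  have k2 := key (p / 2) (by linarith) (by linarith)
  rw [hV] at k1 k2
  have hle : y * u1 + (1 - y) * u2 ≤ y * u3 + (1 - y) * u4 := by nlinarith [k1]
  have hge : y * u3 + (1 - y) * u4 ≤ y * u1 + (1 - y) * u2 := by nlinarith [k2]
  have hAB : y * u1 + (1 - y) * u2 = y * u3 + (1 - y) * u4 := le_antisymm hle hge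
  have hyD : y * (u1 - u2 - u3 + u4) = u4 - u2 := by linear_combination hAB
  rw [hV, ← hAB, eq_div_iff (ne_of_gt hD)]
  linear_combination (u1 - u2) * hyD
end

section
/- Define the gradient-ascent vector field F on (0,1)^4 × (0,1) by F_i(x,y) := x_i·(1−x_i)·∂u^st(x,y)/∂x_i for i = 1,2,3,4 and F_5(x,y) := −y·(1−y)·∂u^st(x,y)/∂y. Then F admits the closed form F_i(x,y) = x_i·(1−x_i)·(u1−u2−u3+u4)·(y−y^o)·∂x^st(x,y)/∂x_i and F_5(x,y) = −y·(1−y)·(u1−u2−u3+u4)·[(y−y^o)·∂x^st(x,y)/∂y + (x^st(x,y)−x^o)]. -/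
/-- Partial derivative of a function of z = (x1,x2,x3,x4,y) with respect to the j-th
coordinate. -/
noncomputable def pderiv5 (f : (Fin 5 → ℝ) → ℝ) (z : Fin 5 → ℝ) (j : Fin 5) : ℝ :=
  deriv (fun t => f (Function.update z j t)) (z j)

/-- x^st as a function of z = (x1,x2,x3,x4,y). -/
noncomputable def xstZ (z : Fin 5 → ℝ) : ℝ := xst (z 0) (z 1) (z 2) (z 3) (z 4)

/-- u^st as a function of z = (x1,x2,x3,x4,y). -/
noncomputable def ustZ (u1 u2 u3 u4 : ℝ) (z : Fin 5 → ℝ) : ℝ :=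
  ust u1 u2 u3 u4 (z 0) (z 1) (z 2) (z 3) (z 4)

/-- The gradient-ascent vector field: F_i = x_i(1−x_i)·∂u^st/∂x_i for i = 1,…,4 and
F_5 = −y(1−y)·∂u^st/∂y. -/
noncomputable def Fvec (u1 u2 u3 u4 : ℝ) (z : Fin 5 → ℝ) (i : Fin 5) : ℝ :=
  if i = 4 then -(z 4 * (1 - z 4) * pderiv5 (ustZ u1 u2 u3 u4) z 4)
  else z i * (1 - z i) * pderiv5 (ustZ u1 u2 u3 u4) z i

/-- The Jacobian matrix of the gradient-ascent vector field at z. -/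
noncomputable def Jmat (u1 u2 u3 u4 : ℝ) (z : Fin 5 → ℝ) : Matrix (Fin 5) (Fin 5) ℝ :=
  Matrix.of fun i j => pderiv5 (fun w => Fvec u1 u2 u3 u4 w i) z j

/- Since u^st is affine in x^st with slope (u1 − u2 − u3 + u4)·y − (u4 − u2) depending on y alone,
the x_i-derivatives of u^st are this slope times those of x^st, while the y-derivative picks up
the extra term (u1 − u2 − u3 + u4)·x^st + u3 − u4 from the product rule. -/

variable {u1 u2 u3 u4 : ℝ}

theorem ustZ_eq_affine (w : Fin 5 → ℝ) :
    ustZ u1 u2 u3 u4 w =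
      ((u1 - u2 - u3 + u4) * w 4 - (u4 - u2)) * xstZ w + (w 4 * u3 + (1 - w 4) * u4) := by
  simp only [ustZ, ust, xstZ]
  ring

theorem pderiv5_ustZ_of_ne_four {i : Fin 5} (hi : i ≠ 4) (z : Fin 5 → ℝ) :
    pderiv5 (ustZ u1 u2 u3 u4) z i =
      ((u1 - u2 - u3 + u4) * z 4 - (u4 - u2)) * pderiv5 xstZ z i := by
  have hslice : (fun t => ustZ u1 u2 u3 u4 (Function.update z i t)) = fun t =>
      ((u1 - u2 - u3 + u4) * z 4 - (u4 - u2)) * xstZ (Function.update z i t) +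
        (z 4 * u3 + (1 - z 4) * u4) := by
    funext t
    rw [ustZ_eq_affine, Function.update_of_ne hi.symm]
  rw [pderiv5, hslice, deriv_add_const, deriv_const_mul_field, pderiv5]

theorem Del_pos {x1 x2 x3 x4 y : ℝ} (h1 : x1 < 1) (h2 : x2 < 1) (h3 : 0 < x3) (h4 : 0 < x4)
    (hy : y ∈ Set.Ioo (0 : ℝ) 1) : 0 < Del x1 x2 x3 x4 y := by
  have hsplit : Del x1 x2 x3 x4 y = y * (1 - x1 + x3) + (1 - y) * (1 - x2 + x4) := by
    unfold Del
    ring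
  rw [hsplit]
  exact add_pos (mul_pos hy.1 (by linarith)) (mul_pos (by linarith [hy.2]) (by linarith))

theorem differentiableAt_xst {x1 x2 x3 x4 y : ℝ} (h : Del x1 x2 x3 x4 y ≠ 0) :
    DifferentiableAt ℝ (xst x1 x2 x3 x4) y :=
  (by fun_prop : DifferentiableAt ℝ (fun t => x3 * t + x4 * (1 - t)) y).div
    (by unfold Del; fun_prop) h

theorem pderiv5_ustZ_four (z : Fin 5 → ℝ) (hz : Del (z 0) (z 1) (z 2) (z 3) (z 4) ≠ 0) :
    pderiv5 (ustZ u1 u2 u3 u4) z 4 =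
      (u1 - u2 - u3 + u4) * xstZ z +
        ((u1 - u2 - u3 + u4) * z 4 - (u4 - u2)) * pderiv5 xstZ z 4 + (u3 - u4) := by
  have hxslice : (fun t => xstZ (Function.update z 4 t)) = xst (z 0) (z 1) (z 2) (z 3) := by
    funext t
    simp [xstZ]
  have huslice : (fun t => ustZ u1 u2 u3 u4 (Function.update z 4 t)) = fun t =>
      ((u1 - u2 - u3 + u4) * t - (u4 - u2)) * xst (z 0) (z 1) (z 2) (z 3) t +
        (t * u3 + (1 - t) * u4) := by
    funext t
    rw [ustZ_eq_affine, ← congrFun hxslice t, Function.update_self]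
  have hderiv : HasDerivAt (fun t => ((u1 - u2 - u3 + u4) * t - (u4 - u2)) *
      xst (z 0) (z 1) (z 2) (z 3) t + (t * u3 + (1 - t) * u4))
      ((u1 - u2 - u3 + u4) * 1 * xst (z 0) (z 1) (z 2) (z 3) (z 4) +
        ((u1 - u2 - u3 + u4) * z 4 - (u4 - u2)) * deriv (xst (z 0) (z 1) (z 2) (z 3)) (z 4) +
        (1 * u3 + -1 * u4)) (z 4) :=
    ((((hasDerivAt_id' (z 4)).const_mul _).sub_const _).mul
      (differentiableAt_xst hz).hasDerivAt).add
      (((hasDerivAt_id' (z 4)).mul_const u3).add (((hasDerivAt_id' (z 4)).const_sub 1).mul_const u4))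
  rw [pderiv5, huslice, pderiv5, hxslice, hderiv.deriv, xstZ]
  ring

theorem stmt14_general (u1 u2 u3 u4 : ℝ)
    (h12 : u1 > u2) (h43 : u4 > u3)
    (x1 x2 x3 x4 y : ℝ)
    (h1 : x1 ∈ Set.Ioo (0 : ℝ) 1) (h2 : x2 ∈ Set.Ioo (0 : ℝ) 1)
    (h3 : x3 ∈ Set.Ioo (0 : ℝ) 1) (h4 : x4 ∈ Set.Ioo (0 : ℝ) 1)
    (hy : y ∈ Set.Ioo (0 : ℝ) 1) :
    (∀ i : Fin 5, i ≠ 4 →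
      Fvec u1 u2 u3 u4 ![x1, x2, x3, x4, y] i =
        ![x1, x2, x3, x4, y] i * (1 - ![x1, x2, x3, x4, y] i) *
          (u1 - u2 - u3 + u4) * (y - (u4 - u2) / (u1 - u2 - u3 + u4)) *
          pderiv5 xstZ ![x1, x2, x3, x4, y] i) ∧
    Fvec u1 u2 u3 u4 ![x1, x2, x3, x4, y] 4 =
      -(y * (1 - y) * (u1 - u2 - u3 + u4) *
        ((y - (u4 - u2) / (u1 - u2 - u3 + u4)) * pderiv5 xstZ ![x1, x2, x3, x4, y] 4 +
          (xst x1 x2 x3 x4 y - (u4 - u3) / (u1 - u2 - u3 + u4)))) := by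
  have hD : u1 - u2 - u3 + u4 ≠ 0 := by linarith
  have hy4 : ![x1, x2, x3, x4, y] 4 = y := rfl
  refine ⟨fun i hi => ?_, ?_⟩
  · rw [Fvec, if_neg hi, pderiv5_ustZ_of_ne_four hi, hy4]
    field_simp
  · have hDel := Del_pos h1.2 h2.2 h3.1 h4.1 hy
    rw [Fvec, if_pos rfl, pderiv5_ustZ_four _ hDel.ne', hy4, show xstZ ![x1, x2, x3, x4, y] = xst x1 x2 x3 x4 y from rfl]
    field_simp
    ring

/-- closed form of the gradient-ascent vector field. -/
theorem stmt14 (u1 u2 u3 u4 : ℝ)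
    (h12 : u1 > u2) (h13 : u1 > u3) (h42 : u4 > u2) (h43 : u4 > u3)
    (x1 x2 x3 x4 y : ℝ)
    (h1 : x1 ∈ Set.Ioo (0 : ℝ) 1) (h2 : x2 ∈ Set.Ioo (0 : ℝ) 1)
    (h3 : x3 ∈ Set.Ioo (0 : ℝ) 1) (h4 : x4 ∈ Set.Ioo (0 : ℝ) 1)
    (hy : y ∈ Set.Ioo (0 : ℝ) 1) :
    (∀ i : Fin 5, i ≠ 4 →
      Fvec u1 u2 u3 u4 ![x1, x2, x3, x4, y] i =
        ![x1, x2, x3, x4, y] i * (1 - ![x1, x2, x3, x4, y] i) *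
          (u1 - u2 - u3 + u4) * (y - (u4 - u2) / (u1 - u2 - u3 + u4)) *
          pderiv5 xstZ ![x1, x2, x3, x4, y] i) ∧
    Fvec u1 u2 u3 u4 ![x1, x2, x3, x4, y] 4 =
      -(y * (1 - y) * (u1 - u2 - u3 + u4) *
        ((y - (u4 - u2) / (u1 - u2 - u3 + u4)) * pderiv5 xstZ ![x1, x2, x3, x4, y] 4 +
          (xst x1 x2 x3 x4 y - (u4 - u3) / (u1 - u2 - u3 + u4)))) :=
  stmt14_general u1 u2 u3 u4 h12 h43 x1 x2 x3 x4 y h1 h2 h3 h4 hy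
end

section
/- Let (x*, y*) ∈ (0,1)^4 × (0,1) satisfy x^st(x*, y*) = x^o and y* = y^o, and let J be the 5×5 Jacobian matrix of the gradient-ascent vector field F at (x*, y*), J_{ij} := ∂F_i/∂z_j evaluated at (x*,y*) with z = (x1,x2,x3,x4,y). Then J_{ij} = 0 for all 1 ≤ i,j ≤ 4; J_{i5} = x_i*·(1−x_i*)·(u1−u2−u3+u4)·∂x^st/∂x_i|_(x*,y*) > 0 for i = 1,...,4; J_{5j} = −y*·(1−y*)·(u1−u2−u3+u4)·∂x^st/∂x_j|_(x*,y*) < 0 for j = 1,...,4; and J_{55} = −2·y*·(1−y*)·(u1−u2−u3+u4)·∂x^st/∂y|_(x*,y*). -/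
/-! The stationary payoff is bilinear in `(x^st, y)`:
`u^st = x^st * slopeX y + y * u3 + (1 - y) * u4`, so `∂u^st/∂x_i = ∂x^st/∂x_i * slopeX y` for
`i = 1, …, 4` and `∂u^st/∂y = ∂x^st/∂y * slopeX y + slopeY x^st`. The equilibrium conditions say exactly
that `slopeX y*` and `slopeY x^st(x*, y*)` vanish. Every component of `F` is therefore a product
`g * h` with `h` vanishing at the equilibrium, and the derivative of such a product there is
`g * h'` as soon as `g` is merely continuous; so no second derivative of `x^st` is needed. The
signs come from the quotient-rule formula for `∂x^st/∂x_i`, whose numerators are positive on the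
open cube. -/

open Filter Topology Function

theorem HasDerivAt.continuousAt_mul_of_eq_zero {𝕜 : Type*} [NontriviallyNormedField 𝕜]
    {g h : 𝕜 → 𝕜} {a h' : 𝕜} (hh : HasDerivAt h h' a) (hg : ContinuousAt g a) (h0 : h a = 0) :
    HasDerivAt (fun t => g t * h t) (g a * h') a := by
  rw [hasDerivAt_iff_tendsto_slope] at hh ⊢
  have hslope : slope (fun t => g t * h t) a = fun t => g t * slope h a t := by
    funext t
    simp only [slope_def_field, h0, mul_zero, sub_zero]
    ring
  rw [hslope]
  exact (hg.tendsto.mono_left nhdsWithin_le_nhds).mul hh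

theorem hasDerivAt_update_of_affine {ι : Type*} [DecidableEq ι] {f : (ι → ℝ) → ℝ}
    {z : ι → ℝ} {i : ι} {c : ℝ} (hf : ∀ t, f (update z i t) = f z + c * (t - z i)) :
    HasDerivAt (fun t => f (update z i t)) c (z i) := by
  simp only [hf]
  simpa using (((hasDerivAt_id (z i)).sub_const (z i)).const_mul c).const_add (f z)

noncomputable section

namespace GradientAscent

def xstNum (z : Fin 5 → ℝ) : ℝ := z 2 * z 4 + z 3 * (1 - z 4)

def xstDen (z : Fin 5 → ℝ) : ℝ := Del (z 0) (z 1) (z 2) (z 3) (z 4)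

def xstNumGrad (z : Fin 5 → ℝ) : Fin 5 → ℝ := ![0, 0, z 4, 1 - z 4, z 2 - z 3]

def xstDenGrad (z : Fin 5 → ℝ) : Fin 5 → ℝ :=
  ![-z 4, -(1 - z 4), z 4, 1 - z 4, z 1 - z 0 + z 2 - z 3]

def xstGrad (z : Fin 5 → ℝ) (i : Fin 5) : ℝ :=
  (xstNumGrad z i * xstDen z - xstNum z * xstDenGrad z i) / xstDen z ^ 2

lemma xstZ_eq_div (z : Fin 5 → ℝ) : xstZ z = xstNum z / xstDen z := rfl

lemma xstNum_update (z : Fin 5 → ℝ) (i : Fin 5) (t : ℝ) :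
    xstNum (update z i t) = xstNum z + xstNumGrad z i * (t - z i) := by
  fin_cases i <;> simp [xstNum, xstNumGrad] <;> ring

lemma xstDen_update (z : Fin 5 → ℝ) (i : Fin 5) (t : ℝ) :
    xstDen (update z i t) = xstDen z + xstDenGrad z i * (t - z i) := by
  fin_cases i <;> simp [xstDen, Del, xstDenGrad] <;> ring

lemma continuous_xstNum : Continuous xstNum := by unfold xstNum; fun_prop

lemma continuous_xstDen : Continuous xstDen := by unfold xstDen Del; fun_prop

lemma continuous_xstNumGrad (i : Fin 5) : Continuous fun z => xstNumGrad z i := by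
  fin_cases i <;> simp [xstNumGrad] <;> fun_prop

lemma continuous_xstDenGrad (i : Fin 5) : Continuous fun z => xstDenGrad z i := by
  fin_cases i <;> simp [xstDenGrad] <;> fun_prop

lemma hasDerivAt_xstZ_update {z : Fin 5 → ℝ} (hz : xstDen z ≠ 0) (i : Fin 5) :
    HasDerivAt (fun t => xstZ (update z i t)) (xstGrad z i) (z i) := by
  simp only [xstZ_eq_div]
  exact ((hasDerivAt_update_of_affine (xstNum_update z i)).div
    (hasDerivAt_update_of_affine (xstDen_update z i)) (by simpa using hz)).congr_deriv
    (by simp [xstGrad])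

lemma pderiv5_xstZ {z : Fin 5 → ℝ} (hz : xstDen z ≠ 0) (i : Fin 5) :
    pderiv5 xstZ z i = xstGrad z i :=
  (hasDerivAt_xstZ_update hz i).deriv

lemma continuousAt_xstGrad_update {z : Fin 5 → ℝ} (hz : xstDen z ≠ 0) (i j : Fin 5) :
    ContinuousAt (fun t => xstGrad (update z j t) i) (z j) := by
  have hgrad : ContinuousAt (fun w => xstGrad w i) z :=
    (((continuous_xstNumGrad i).mul continuous_xstDen).sub
      (continuous_xstNum.mul (continuous_xstDenGrad i))).continuousAt.div
      (continuous_xstDen.pow 2).continuousAt (pow_ne_zero 2 hz)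
  exact hgrad.comp_of_eq (continuous_const.update j continuous_id).continuousAt (by simp)

lemma eventually_xstDen_update_ne {z : Fin 5 → ℝ} (hz : xstDen z ≠ 0) (j : Fin 5) :
    ∀ᶠ t in 𝓝 (z j), xstDen (update z j t) ≠ 0 :=
  (continuous_xstDen.comp (continuous_const.update j continuous_id)).continuousAt.eventually_ne
    (by simpa using hz)

section cube

variable {z : Fin 5 → ℝ} (hz : ∀ i, z i ∈ Set.Ioo (0 : ℝ) 1)
include hz

lemma xstNum_pos : 0 < xstNum z :=
  add_pos (mul_pos (hz 2).1 (hz 4).1) (mul_pos (hz 3).1 (sub_pos.2 (hz 4).2))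

lemma xstNum_lt_xstDen : xstNum z < xstDen z := by
  have hgap : xstDen z - xstNum z = (1 - z 0) * z 4 + (1 - z 1) * (1 - z 4) := by
    unfold xstDen Del xstNum; ring
  have := add_pos (mul_pos (sub_pos.2 (hz 0).2) (hz 4).1)
    (mul_pos (sub_pos.2 (hz 1).2) (sub_pos.2 (hz 4).2))
  linarith

lemma xstDen_pos : 0 < xstDen z := (xstNum_pos hz).trans (xstNum_lt_xstDen hz)

lemma xstGrad_pos {i : Fin 5} (hi : i ≠ 4) : 0 < xstGrad z i := by
  have hN := xstNum_pos hz
  have hDN := sub_pos.2 (xstNum_lt_xstDen hz)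
  have hy := (hz 4).1
  have hy' := sub_pos.2 (hz 4).2
  refine div_pos ?_ (pow_pos (xstDen_pos hz) 2)
  fin_cases i
  all_goals simp [xstNumGrad, xstDenGrad] at hi ⊢
  all_goals nlinarith [mul_pos hN hy, mul_pos hN hy', mul_pos hDN hy, mul_pos hDN hy']

end cube

section payoff

variable (u1 u2 u3 u4 : ℝ)

def slopeX (y : ℝ) : ℝ := y * (u1 - u2 - u3 + u4) - (u4 - u2)

def slopeY (x : ℝ) : ℝ := x * (u1 - u2 - u3 + u4) - (u4 - u3)

lemma ustZ_eq (w : Fin 5 → ℝ) :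
    ustZ u1 u2 u3 u4 w = xstZ w * slopeX u1 u2 u3 u4 (w 4) + w 4 * u3 + (1 - w 4) * u4 := by
  unfold ustZ ust xstZ slopeX; ring

lemma hasDerivAt_slopeX (y : ℝ) : HasDerivAt (slopeX u1 u2 u3 u4) (u1 - u2 - u3 + u4) y :=
  (((hasDerivAt_id y).mul_const _).sub_const _).congr_deriv (one_mul _)

lemma hasDerivAt_slopeY_xstZ_update {z : Fin 5 → ℝ} (hz : xstDen z ≠ 0) (j : Fin 5) :
    HasDerivAt (fun t => slopeY u1 u2 u3 u4 (xstZ (update z j t)))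
      (xstGrad z j * (u1 - u2 - u3 + u4)) (z j) :=
  ((hasDerivAt_xstZ_update hz j).mul_const _).sub_const _

lemma hasDerivAt_ustZ_update_of_ne {z : Fin 5 → ℝ} (hz : xstDen z ≠ 0) {i : Fin 5}
    (hi : i ≠ 4) :
    HasDerivAt (fun t => ustZ u1 u2 u3 u4 (update z i t))
      (xstGrad z i * slopeX u1 u2 u3 u4 (z 4)) (z i) := by
  simp only [ustZ_eq, update_of_ne hi.symm]
  exact (((hasDerivAt_xstZ_update hz i).mul_const _).add_const _).add_const _

lemma hasDerivAt_ustZ_update_four {z : Fin 5 → ℝ} (hz : xstDen z ≠ 0) :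
    HasDerivAt (fun t => ustZ u1 u2 u3 u4 (update z 4 t))
      (xstGrad z 4 * slopeX u1 u2 u3 u4 (z 4) + slopeY u1 u2 u3 u4 (xstZ z)) (z 4) := by
  simp only [ustZ_eq, update_self]
  refine ((((hasDerivAt_xstZ_update hz 4).mul (hasDerivAt_slopeX u1 u2 u3 u4 _)).add
    ((hasDerivAt_id _).mul_const u3)).add
    (((hasDerivAt_id _).const_sub 1).mul_const u4)).congr_deriv ?_
  simp only [slopeY, update_eq_self]
  ring

lemma Fvec_of_ne {w : Fin 5 → ℝ} (hw : xstDen w ≠ 0) {i : Fin 5} (hi : i ≠ 4) :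
    Fvec u1 u2 u3 u4 w i = w i * (1 - w i) * xstGrad w i * slopeX u1 u2 u3 u4 (w 4) := by
  rw [Fvec, if_neg hi, pderiv5, (hasDerivAt_ustZ_update_of_ne u1 u2 u3 u4 hw hi).deriv]
  ring

lemma Fvec_four {w : Fin 5 → ℝ} (hw : xstDen w ≠ 0) :
    Fvec u1 u2 u3 u4 w 4 = -(w 4 * (1 - w 4) *
      (xstGrad w 4 * slopeX u1 u2 u3 u4 (w 4) + slopeY u1 u2 u3 u4 (xstZ w))) := by
  rw [Fvec, if_pos rfl, pderiv5, (hasDerivAt_ustZ_update_four u1 u2 u3 u4 hw).deriv]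

variable {u1 u2 u3 u4} {z : Fin 5 → ℝ}

lemma Jmat_apply_eq_zero (hz : xstDen z ≠ 0) (hX : slopeX u1 u2 u3 u4 (z 4) = 0)
    {i j : Fin 5} (hi : i ≠ 4) (hj : j ≠ 4) :
    Jmat u1 u2 u3 u4 z i j = 0 := by
  have h : (fun t => Fvec u1 u2 u3 u4 (update z j t) i) =ᶠ[𝓝 (z j)] fun _ => 0 := by
    filter_upwards [eventually_xstDen_update_ne hz j] with t ht
    rw [Fvec_of_ne u1 u2 u3 u4 ht hi, update_of_ne hj.symm, hX, mul_zero]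
  rw [Jmat, Matrix.of_apply, pderiv5, h.deriv_eq, deriv_const]

lemma Jmat_apply_four (hz : xstDen z ≠ 0) (hX : slopeX u1 u2 u3 u4 (z 4) = 0)
    {i : Fin 5} (hi : i ≠ 4) :
    Jmat u1 u2 u3 u4 z i 4 = z i * (1 - z i) * (u1 - u2 - u3 + u4) * xstGrad z i := by
  have h : (fun t => Fvec u1 u2 u3 u4 (update z 4 t) i) =ᶠ[𝓝 (z 4)]
      fun t => z i * (1 - z i) * xstGrad (update z 4 t) i * slopeX u1 u2 u3 u4 t := by
    filter_upwards [eventually_xstDen_update_ne hz 4] with t ht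
    rw [Fvec_of_ne u1 u2 u3 u4 ht hi, update_of_ne hi, update_self]
  have hd := (hasDerivAt_slopeX u1 u2 u3 u4 (z 4)).continuousAt_mul_of_eq_zero
    ((continuousAt_xstGrad_update hz i 4).const_mul (z i * (1 - z i))) hX
  rw [Jmat, Matrix.of_apply, pderiv5, h.deriv_eq]
  exact hd.deriv.trans (by rw [update_eq_self]; ring)

lemma Jmat_four_apply (hz : xstDen z ≠ 0) (hX : slopeX u1 u2 u3 u4 (z 4) = 0)
    {j : Fin 5} (hj : j ≠ 4) :
    Jmat u1 u2 u3 u4 z 4 j = -(z 4 * (1 - z 4) * (u1 - u2 - u3 + u4) * xstGrad z j) := by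
  have h : (fun t => Fvec u1 u2 u3 u4 (update z j t) 4) =ᶠ[𝓝 (z j)]
      fun t => -(z 4 * (1 - z 4) * slopeY u1 u2 u3 u4 (xstZ (update z j t))) := by
    filter_upwards [eventually_xstDen_update_ne hz j] with t ht
    rw [Fvec_four u1 u2 u3 u4 ht, update_of_ne hj.symm, hX, mul_zero, zero_add]
  rw [Jmat, Matrix.of_apply, pderiv5, h.deriv_eq]
  exact (((hasDerivAt_slopeY_xstZ_update u1 u2 u3 u4 hz j).const_mul _).neg).deriv.trans
    (by ring)

lemma Jmat_four_four (hz : xstDen z ≠ 0) (hX : slopeX u1 u2 u3 u4 (z 4) = 0)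
    (hY : slopeY u1 u2 u3 u4 (xstZ z) = 0) :
    Jmat u1 u2 u3 u4 z 4 4 = -(2 * z 4 * (1 - z 4) * (u1 - u2 - u3 + u4) * xstGrad z 4) := by
  have h : (fun t => Fvec u1 u2 u3 u4 (update z 4 t) 4) =ᶠ[𝓝 (z 4)]
      fun t => -(t * (1 - t)) * (xstGrad (update z 4 t) 4 * slopeX u1 u2 u3 u4 t +
        slopeY u1 u2 u3 u4 (xstZ (update z 4 t))) := by
    filter_upwards [eventually_xstDen_update_ne hz 4] with t ht
    rw [Fvec_four u1 u2 u3 u4 ht, update_self, neg_mul]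
  have hinner := ((hasDerivAt_slopeX u1 u2 u3 u4 (z 4)).continuousAt_mul_of_eq_zero
    (continuousAt_xstGrad_update hz 4 4) hX).add (hasDerivAt_slopeY_xstZ_update u1 u2 u3 u4 hz 4)
  have hd := hinner.continuousAt_mul_of_eq_zero (g := fun t => -(t * (1 - t)))
    (by fun_prop) (by simp [hX, hY])
  rw [Jmat, Matrix.of_apply, pderiv5, h.deriv_eq]
  exact hd.deriv.trans (by rw [update_eq_self]; ring)

end payoff

end GradientAscent

end

open GradientAscent

theorem stmt16_general (u1 u2 u3 u4 : ℝ)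
    (h12 : u1 > u2) (h43 : u4 > u3)
    (x1 x2 x3 x4 y : ℝ)
    (h1 : x1 ∈ Set.Ioo (0 : ℝ) 1) (h2 : x2 ∈ Set.Ioo (0 : ℝ) 1)
    (h3 : x3 ∈ Set.Ioo (0 : ℝ) 1) (h4 : x4 ∈ Set.Ioo (0 : ℝ) 1)
    (hy : y ∈ Set.Ioo (0 : ℝ) 1)
    (hxst : xst x1 x2 x3 x4 y = (u4 - u3) / (u1 - u2 - u3 + u4))
    (hyo : y = (u4 - u2) / (u1 - u2 - u3 + u4)) :
    (∀ i j : Fin 5, i ≠ 4 → j ≠ 4 → Jmat u1 u2 u3 u4 ![x1, x2, x3, x4, y] i j = 0) ∧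
    (∀ i : Fin 5, i ≠ 4 →
      Jmat u1 u2 u3 u4 ![x1, x2, x3, x4, y] i 4 =
        ![x1, x2, x3, x4, y] i * (1 - ![x1, x2, x3, x4, y] i) * (u1 - u2 - u3 + u4) *
          pderiv5 xstZ ![x1, x2, x3, x4, y] i ∧
      0 < Jmat u1 u2 u3 u4 ![x1, x2, x3, x4, y] i 4) ∧
    (∀ j : Fin 5, j ≠ 4 →
      Jmat u1 u2 u3 u4 ![x1, x2, x3, x4, y] 4 j =
        -(y * (1 - y) * (u1 - u2 - u3 + u4) * pderiv5 xstZ ![x1, x2, x3, x4, y] j) ∧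
      Jmat u1 u2 u3 u4 ![x1, x2, x3, x4, y] 4 j < 0) ∧
    Jmat u1 u2 u3 u4 ![x1, x2, x3, x4, y] 4 4 =
      -(2 * y * (1 - y) * (u1 - u2 - u3 + u4) * pderiv5 xstZ ![x1, x2, x3, x4, y] 4) := by
  set z : Fin 5 → ℝ := ![x1, x2, x3, x4, y]
  have hD : 0 < u1 - u2 - u3 + u4 := by linarith
  have hz : ∀ i, z i ∈ Set.Ioo (0 : ℝ) 1 := by
    intro i
    fin_cases i <;> assumption
  have hden : xstDen z ≠ 0 := (xstDen_pos hz).ne'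
  have hX : slopeX u1 u2 u3 u4 (z 4) = 0 := by
    rw [slopeX, show z 4 = y from rfl, hyo, div_mul_cancel₀ _ hD.ne', sub_self]
  have hY : slopeY u1 u2 u3 u4 (xstZ z) = 0 := by
    rw [slopeY, show xstZ z = xst x1 x2 x3 x4 y from rfl, hxst, div_mul_cancel₀ _ hD.ne',
      sub_self]
  have hyy : 0 < y * (1 - y) := mul_pos hy.1 (sub_pos.2 hy.2)
  simp only [pderiv5_xstZ hden]
  refine ⟨fun i j hi hj => Jmat_apply_eq_zero hden hX hi hj, fun i hi => ?_, fun j hj => ?_,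
    Jmat_four_four hden hX hY⟩
  · rw [Jmat_apply_four hden hX hi]
    exact ⟨rfl, mul_pos (mul_pos (mul_pos (hz i).1 (sub_pos.2 (hz i).2)) hD) (xstGrad_pos hz hi)⟩
  · rw [Jmat_four_apply hden hX hj]
    exact ⟨rfl, neg_neg_of_pos (mul_pos (mul_pos hyy hD) (xstGrad_pos hz hj))⟩

/-- entries of the Jacobian of the gradient-ascent field at an
equilibrium point. -/
theorem stmt16 (u1 u2 u3 u4 : ℝ)
    (h12 : u1 > u2) (h13 : u1 > u3) (h42 : u4 > u2) (h43 : u4 > u3)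
    (x1 x2 x3 x4 y : ℝ)
    (h1 : x1 ∈ Set.Ioo (0 : ℝ) 1) (h2 : x2 ∈ Set.Ioo (0 : ℝ) 1)
    (h3 : x3 ∈ Set.Ioo (0 : ℝ) 1) (h4 : x4 ∈ Set.Ioo (0 : ℝ) 1)
    (hy : y ∈ Set.Ioo (0 : ℝ) 1)
    (hxst : xst x1 x2 x3 x4 y = (u4 - u3) / (u1 - u2 - u3 + u4))
    (hyo : y = (u4 - u2) / (u1 - u2 - u3 + u4)) :
    (∀ i j : Fin 5, i ≠ 4 → j ≠ 4 → Jmat u1 u2 u3 u4 ![x1, x2, x3, x4, y] i j = 0) ∧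
    (∀ i : Fin 5, i ≠ 4 →
      Jmat u1 u2 u3 u4 ![x1, x2, x3, x4, y] i 4 =
        ![x1, x2, x3, x4, y] i * (1 - ![x1, x2, x3, x4, y] i) * (u1 - u2 - u3 + u4) *
          pderiv5 xstZ ![x1, x2, x3, x4, y] i ∧
      0 < Jmat u1 u2 u3 u4 ![x1, x2, x3, x4, y] i 4) ∧
    (∀ j : Fin 5, j ≠ 4 →
      Jmat u1 u2 u3 u4 ![x1, x2, x3, x4, y] 4 j =
        -(y * (1 - y) * (u1 - u2 - u3 + u4) * pderiv5 xstZ ![x1, x2, x3, x4, y] j) ∧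
      Jmat u1 u2 u3 u4 ![x1, x2, x3, x4, y] 4 j < 0) ∧
    Jmat u1 u2 u3 u4 ![x1, x2, x3, x4, y] 4 4 =
      -(2 * y * (1 - y) * (u1 - u2 - u3 + u4) * pderiv5 xstZ ![x1, x2, x3, x4, y] 4) :=
  stmt16_general u1 u2 u3 u4 h12 h43 x1 x2 x3 x4 y h1 h2 h3 h4 hy hxst hyo
end
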